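/- Suppose Z_c, Φ, Y, E, X are random variables such that I(Y;E|(Z_c,Φ)) = 0 and I(Y;E|(Z_1,Z_2)) = 0 for any sub-tuples Z_1 of Z_c and Z_2 of Φ. Then for Z = (Z_1,Z_2) and all λ, β > 0: λ·I(Y;E|Z) + β·I(X;Z) ≤ λ·I(Y;E|(Z_c,Φ)) + β·I(X;(Z_c,Φ)). -/
import Mathlib


open MeasureTheory Real

namespace FakeInvariance

variable {Ω : Type*} [MeasurableSpace Ω]

/-- Shannon entropy of a finite-valued random variable. -/
noncomputable def entropy {S : Type*} [Fintype S] (μ : Measure Ω) (X : Ω → S) : ℝ :=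
  - ∑ x : S, (μ (X ⁻¹' {x})).toReal * Real.log (μ (X ⁻¹' {x})).toReal

/-- Mutual information between two finite-valued random variables. -/
noncomputable def mutualInfo {S T : Type*} [Fintype S] [Fintype T]
    (μ : Measure Ω) (X : Ω → S) (Y : Ω → T) : ℝ :=
  entropy μ X + entropy μ Y - entropy μ (fun ω => (X ω, Y ω))

/-- Conditional Shannon entropy H(X | Y). -/
noncomputable def condEntropy {S T : Type*} [Fintype S] [Fintype T]
    (μ : Measure Ω) (X : Ω → S) (Y : Ω → T) : ℝ :=
  entropy μ (fun ω => (X ω, Y ω)) - entropy μ Y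

/-- Conditional mutual information I(X ; Y | Z). -/
noncomputable def condMutualInfo {S T U : Type*} [Fintype S] [Fintype T] [Fintype U]
    (μ : Measure Ω) (X : Ω → S) (Y : Ω → T) (Z : Ω → U) : ℝ :=
  condEntropy μ X Z - condEntropy μ X (fun ω => (Y ω, Z ω))


lemma entropy_comp_inj {S1 S2 : Type*} [Fintype S1] [Fintype S2]
    (μ : Measure Ω) (T : Ω → S1) (e : S1 → S2) (he : Function.Injective e) :
    entropy μ (fun ω => e (T ω)) = entropy μ T := by
  classical
  unfold entropy
  congr 1
  rw [← Finset.sum_subset (Finset.subset_univ (Finset.univ.image e))]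
  · rw [Finset.sum_image (fun a _ b _ h => he h)]
    apply Finset.sum_congr rfl
    intro x _
    have : (fun ω => e (T ω)) ⁻¹' {e x} = T ⁻¹' {x} := by
      ext ω; simp [he.eq_iff]
    rw [this]
  · intro y _ hy
    have : (fun ω => e (T ω)) ⁻¹' {y} = (∅ : Set Ω) := by
      ext ω
      simp only [Set.mem_preimage, Set.mem_singleton_iff, Set.mem_empty_iff_false, iff_false]
      intro h
      exact hy (Finset.mem_image.mpr ⟨T ω, Finset.mem_univ _, h⟩)
    rw [this]
    simp

lemma inj_snd {α β γ : Type*} (e : β → γ) (he : Function.Injective e) :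
    Function.Injective (fun p : α × β => (p.1, e p.2)) := by
  rintro ⟨a, b⟩ ⟨a', b'⟩ hpq
  simp only [Prod.mk.injEq] at hpq ⊢
  exact ⟨hpq.1, he hpq.2⟩

lemma inj_snd_snd {α β γ δ : Type*} (e : γ → δ) (he : Function.Injective e) :
    Function.Injective (fun p : α × β × γ => (p.1, (p.2.1, e p.2.2))) := by
  rintro ⟨a, b, c⟩ ⟨a', b', c'⟩ hpq
  simp only [Prod.mk.injEq] at hpq ⊢
  exact ⟨hpq.1, hpq.2.1, he hpq.2.2⟩

lemma condMutualInfo_comp_inj {TY TE U U2 : Type*} [Fintype TY] [Fintype TE]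
    [Fintype U] [Fintype U2]
    (μ : Measure Ω) (Y : Ω → TY) (E : Ω → TE) (Z : Ω → U) (e : U → U2)
    (he : Function.Injective e) :
    condMutualInfo μ Y E (fun ω => e (Z ω)) = condMutualInfo μ Y E Z := by
  unfold condMutualInfo condEntropy
  have h1 : entropy μ (fun ω => (Y ω, e (Z ω))) = entropy μ (fun ω => (Y ω, Z ω)) :=
    entropy_comp_inj μ (fun ω => (Y ω, Z ω)) (fun p => (p.1, e p.2)) (inj_snd e he)
  have h2 : entropy μ (fun ω => e (Z ω)) = entropy μ Z := entropy_comp_inj μ Z e he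
  have h3 : entropy μ (fun ω => (E ω, e (Z ω))) = entropy μ (fun ω => (E ω, Z ω)) :=
    entropy_comp_inj μ (fun ω => (E ω, Z ω)) (fun p => (p.1, e p.2)) (inj_snd e he)
  have h4 : entropy μ (fun ω => (Y ω, (E ω, e (Z ω))))
      = entropy μ (fun ω => (Y ω, (E ω, Z ω))) :=
    entropy_comp_inj μ (fun ω => (Y ω, (E ω, Z ω)))
      (fun p => (p.1, (p.2.1, e p.2.2))) (inj_snd_snd e he)
  rw [h1, h2, h3, h4]

lemma inj_prodMap {α β γ δ : Type*} (u : α → γ) (v : β → δ)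
    (hu : Function.Injective u) (hv : Function.Injective v) :
    Function.Injective (Prod.map u v) := by
  rintro ⟨a, b⟩ ⟨a', b'⟩ hpq
  simp only [Prod.map, Prod.mk.injEq] at hpq ⊢
  exact ⟨hu hpq.1, hv hpq.2⟩

lemma measure_inter_fiber_sum {T T2 : Type*} [Fintype T] [MeasurableSpace T]
    [MeasurableSingletonClass T] [DecidableEq T2]
    (μ : Measure Ω) [IsProbabilityMeasure μ]
    (W : Ω → T) (hW : Measurable W) (h : T → T2) (C : Set Ω) (hC : MeasurableSet C) (v : T2) :
    (μ (C ∩ (fun ω => h (W ω)) ⁻¹' {v})).toReal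
      = ∑ t ∈ Finset.univ.filter (fun t => h t = v), (μ (C ∩ W ⁻¹' {t})).toReal := by
  have hset : C ∩ (fun ω => h (W ω)) ⁻¹' {v}
      = ⋃ t ∈ Finset.univ.filter (fun t => h t = v), (C ∩ W ⁻¹' {t}) := by
    ext ω
    simp only [Set.mem_inter_iff, Set.mem_preimage, Set.mem_singleton_iff, Set.mem_iUnion,
      Finset.mem_filter, Finset.mem_univ, true_and]
    constructor
    · rintro ⟨hc, hv⟩; exact ⟨W ω, hv, hc, rfl⟩
    · rintro ⟨t, ht, hc, hw⟩; exact ⟨hc, by rw [hw]; exact ht⟩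
  rw [hset, measure_biUnion_finset]
  · rw [ENNReal.toReal_sum (fun t _ => measure_ne_top μ _)]
  · intro t _ t' _ htt'
    apply Set.disjoint_left.mpr
    rintro ω ⟨-, hw⟩ ⟨-, hw'⟩
    exact htt' (by simp only [Set.mem_preimage, Set.mem_singleton_iff] at hw hw'; rw [← hw, ← hw'])
  · intro t _
    exact hC.inter (hW (measurableSet_singleton t))

lemma measure_split_sum {S : Type*} [Fintype S] [MeasurableSpace S] [MeasurableSingletonClass S]
    (μ : Measure Ω) [IsProbabilityMeasure μ]
    (X : Ω → S) (hX : Measurable X) (B : Set Ω) (hB : MeasurableSet B) :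
    (μ B).toReal = ∑ x : S, (μ (X ⁻¹' {x} ∩ B)).toReal := by
  classical
  have hset : B = ⋃ x ∈ (Finset.univ : Finset S), (X ⁻¹' {x} ∩ B) := by
    ext ω
    aesop
  conv_lhs => rw [hset]
  rw [measure_biUnion_finset]
  · rw [ENNReal.toReal_sum (fun x _ => measure_ne_top μ _)]
  · intro x _ x' _ hxx'
    apply Set.disjoint_left.mpr
    rintro ω ⟨hw, -⟩ ⟨hw', -⟩
    exact hxx' (by simp only [Set.mem_preimage, Set.mem_singleton_iff] at hw hw'; rw [← hw, ← hw'])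
  · intro x _
    exact (hX (measurableSet_singleton x)).inter hB

lemma mutualInfo_comp_le {S T T2 : Type*}
    [Fintype S] [MeasurableSpace S] [MeasurableSingletonClass S]
    [Fintype T] [MeasurableSpace T] [MeasurableSingletonClass T] [Fintype T2]
    (μ : Measure Ω) [IsProbabilityMeasure μ]
    (X : Ω → S) (W : Ω → T) (h : T → T2) (hX : Measurable X) (hW : Measurable W) :
    mutualInfo μ X (fun ω => h (W ω)) ≤ mutualInfo μ X W := by
  classical
  set q : S → T → ℝ := fun x t => (μ (X ⁻¹' {x} ∩ W ⁻¹' {t})).toReal with hq_def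
  set r : T → ℝ := fun t => (μ (W ⁻¹' {t})).toReal with hr_def
  set s : T2 → ℝ := fun v => (μ ((fun ω => h (W ω)) ⁻¹' {v})).toReal with hs_def
  set m : S → T2 → ℝ := fun x v => (μ (X ⁻¹' {x} ∩ (fun ω => h (W ω)) ⁻¹' {v})).toReal
    with hm_def
  have hq0 : ∀ x t, 0 ≤ q x t := fun x t => ENNReal.toReal_nonneg
  have hr0 : ∀ t, 0 ≤ r t := fun t => ENNReal.toReal_nonneg
  have hs0 : ∀ v, 0 ≤ s v := fun v => ENNReal.toReal_nonneg
  have hm0 : ∀ x v, 0 ≤ m x v := fun x v => ENNReal.toReal_nonneg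
  have hF1 : ∀ t, r t = ∑ x : S, q x t := fun t =>
    measure_split_sum μ X hX _ (hW (measurableSet_singleton t))
  have hFib : ∀ (x : S) (v : T2),
      m x v = ∑ t ∈ Finset.univ.filter (fun t => h t = v), q x t := fun x v =>
    measure_inter_fiber_sum μ W hW h _ (hX (measurableSet_singleton x)) v
  have hSFib : ∀ v : T2, s v = ∑ t ∈ Finset.univ.filter (fun t => h t = v), r t := by
    intro v
    have := measure_inter_fiber_sum μ W hW h Set.univ MeasurableSet.univ v
    simpa using this
  have hF2 : ∀ v, s v = ∑ x : S, m x v := by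
    intro v
    rw [hSFib v, Finset.sum_congr rfl (fun t _ => hF1 t), Finset.sum_comm]
    exact Finset.sum_congr rfl (fun x _ => (hFib x v).symm)
  have hqr : ∀ x t, q x t ≤ r t := by
    intro x t
    exact ENNReal.toReal_mono (measure_ne_top μ _) (measure_mono Set.inter_subset_right)
  have hrs : ∀ t, r t ≤ s (h t) := by
    intro t
    apply ENNReal.toReal_mono (measure_ne_top μ _)
    apply measure_mono
    intro ω hω
    simp only [Set.mem_preimage, Set.mem_singleton_iff] at hω ⊢
    rw [hω]
  have hqm : ∀ x t, q x t ≤ m x (h t) := by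
    intro x t
    apply ENNReal.toReal_mono (measure_ne_top μ _)
    apply measure_mono
    apply Set.inter_subset_inter_right
    intro ω hω
    simp only [Set.mem_preimage, Set.mem_singleton_iff] at hω ⊢
    rw [hω]
  have htot : ∑ t : T, r t = 1 := by
    have := measure_split_sum μ W hW Set.univ MeasurableSet.univ
    simp only [Set.inter_univ, measure_univ, ENNReal.toReal_one] at this
    exact this.symm
  -- entropy rewrites
  have hE2 : entropy μ W = - ∑ t : T, ∑ x : S, q x t * Real.log (r t) := by
    unfold entropy
    congr 1
    refine Finset.sum_congr rfl (fun t _ => ?_)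
    calc (μ (W ⁻¹' {t})).toReal * Real.log (μ (W ⁻¹' {t})).toReal
        = r t * Real.log (r t) := rfl
      _ = (∑ x : S, q x t) * Real.log (r t) := by rw [← hF1 t]
      _ = ∑ x : S, q x t * Real.log (r t) := Finset.sum_mul ..
  have hE3 : entropy μ (fun ω => h (W ω)) = - ∑ t : T, ∑ x : S, q x t * Real.log (s (h t)) := by
    unfold entropy
    congr 1
    rw [← Finset.sum_fiberwise Finset.univ h
      (fun t => ∑ x : S, q x t * Real.log (s (h t)))]
    refine Finset.sum_congr rfl (fun v _ => ?_)
    have step1 : ∑ t ∈ Finset.univ.filter (fun t => h t = v),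
        ∑ x : S, q x t * Real.log (s (h t))
        = ∑ t ∈ Finset.univ.filter (fun t => h t = v), r t * Real.log (s v) := by
      refine Finset.sum_congr rfl (fun t ht => ?_)
      have hhtv : h t = v := by simpa using ht
      rw [hhtv, hF1 t, Finset.sum_mul]
    rw [step1, ← Finset.sum_mul, ← hSFib v]
  have hpairq : ∀ x t, (μ ((fun ω => (X ω, W ω)) ⁻¹' {(x, t)})).toReal = q x t := by
    intro x t
    have : (fun ω => (X ω, W ω)) ⁻¹' {(x, t)} = X ⁻¹' {x} ∩ W ⁻¹' {t} := by
      ext ω; simp [Prod.ext_iff]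
    rw [this]
  have hpairm : ∀ x v, (μ ((fun ω => (X ω, h (W ω))) ⁻¹' {(x, v)})).toReal = m x v := by
    intro x v
    have : (fun ω => (X ω, h (W ω))) ⁻¹' {(x, v)}
        = X ⁻¹' {x} ∩ (fun ω => h (W ω)) ⁻¹' {v} := by
      ext ω; simp [Prod.ext_iff]
    rw [this]
  have hE1 : entropy μ (fun ω => (X ω, W ω))
      = - ∑ t : T, ∑ x : S, q x t * Real.log (q x t) := by
    unfold entropy
    rw [Fintype.sum_prod_type]
    congr 1
    rw [Finset.sum_comm]
    exact Finset.sum_congr rfl fun t _ => Finset.sum_congr rfl fun x _ => by rw [hpairq x t]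
  have hE4 : entropy μ (fun ω => (X ω, h (W ω)))
      = - ∑ t : T, ∑ x : S, q x t * Real.log (m x (h t)) := by
    unfold entropy
    rw [Fintype.sum_prod_type]
    congr 1
    have per : ∀ x : S, ∑ v : T2,
        (μ ((fun ω => (X ω, h (W ω))) ⁻¹' {(x, v)})).toReal
          * Real.log (μ ((fun ω => (X ω, h (W ω))) ⁻¹' {(x, v)})).toReal
        = ∑ t : T, q x t * Real.log (m x (h t)) := by
      intro x
      rw [← Finset.sum_fiberwise Finset.univ h (fun t => q x t * Real.log (m x (h t)))]
      refine Finset.sum_congr rfl (fun v _ => ?_)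
      have step1 : ∑ t ∈ Finset.univ.filter (fun t => h t = v),
          q x t * Real.log (m x (h t))
          = ∑ t ∈ Finset.univ.filter (fun t => h t = v), q x t * Real.log (m x v) := by
        refine Finset.sum_congr rfl (fun t ht => ?_)
        have hhtv : h t = v := by simpa using ht
        rw [hhtv]
      rw [step1, ← Finset.sum_mul, ← hFib x v, hpairm x v]
    rw [Finset.sum_congr rfl (fun x _ => per x), Finset.sum_comm]
  -- key inequality
  set b : S → T → ℝ := fun x t => r t * m x (h t) / s (h t) with hb_def
  have hb0 : ∀ x t, 0 ≤ b x t := fun x t =>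
    div_nonneg (mul_nonneg (hr0 t) (hm0 x (h t))) (hs0 (h t))
  have hterm : ∀ x t, q x t - b x t
      ≤ q x t * (Real.log (q x t) + Real.log (s (h t)) - Real.log (r t)
          - Real.log (m x (h t))) := by
    intro x t
    rcases eq_or_lt_of_le (hq0 x t) with hq | hq
    · rw [← hq]
      simp only [zero_sub, zero_mul]
      linarith [hb0 x t]
    · have hr' : 0 < r t := lt_of_lt_of_le hq (hqr x t)
      have hm' : 0 < m x (h t) := lt_of_lt_of_le hq (hqm x t)
      have hs' : 0 < s (h t) := lt_of_lt_of_le hr' (hrs t)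
      have hbpos : 0 < b x t := div_pos (mul_pos hr' hm') hs'
      have h1 : Real.log (b x t / q x t) ≤ b x t / q x t - 1 :=
        Real.log_le_sub_one_of_pos (div_pos hbpos hq)
      have h2 : q x t * Real.log (b x t / q x t) ≤ b x t - q x t := by
        calc q x t * Real.log (b x t / q x t) ≤ q x t * (b x t / q x t - 1) :=
              mul_le_mul_of_nonneg_left h1 (le_of_lt hq)
          _ = b x t - q x t := by field_simp
      have h3 : Real.log (b x t / q x t)
          = Real.log (r t) + Real.log (m x (h t)) - Real.log (s (h t))
            - Real.log (q x t) := by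
        rw [Real.log_div (ne_of_gt hbpos) (ne_of_gt hq)]
        have : b x t = r t * m x (h t) / s (h t) := rfl
        rw [this, Real.log_div (ne_of_gt (mul_pos hr' hm')) (ne_of_gt hs'),
          Real.log_mul (ne_of_gt hr') (ne_of_gt hm')]
      nlinarith [h2, h3]
  have hbsum : ∑ t : T, ∑ x : S, b x t ≤ 1 := by
    rw [← htot]
    apply Finset.sum_le_sum
    intro t _
    rcases eq_or_lt_of_le (hs0 (h t)) with hs' | hs'
    · have hr' : r t = 0 := le_antisymm (by rw [hs']; exact hrs t) (hr0 t)
      have hz : ∀ x : S, b x t = 0 := by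
        intro x
        show r t * m x (h t) / s (h t) = 0
        rw [hr', zero_mul, zero_div]
      rw [Finset.sum_congr rfl (fun x _ => hz x), Finset.sum_const, smul_zero]
      exact hr0 t
    · have : ∑ x : S, b x t = r t := by
        show ∑ x : S, r t * m x (h t) / s (h t) = r t
        rw [← Finset.sum_div, ← Finset.mul_sum, ← hF2 (h t)]
        field_simp
      rw [this]
  have hqsum : ∑ t : T, ∑ x : S, q x t = 1 := by
    rw [← htot]
    exact Finset.sum_congr rfl fun t _ => (hF1 t).symm
  have hkey : 0 ≤ ∑ t : T, ∑ x : S, q x t * (Real.log (q x t) + Real.log (s (h t))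
      - Real.log (r t) - Real.log (m x (h t))) := by
    have h1 : ∑ t : T, ∑ x : S, (q x t - b x t)
        ≤ ∑ t : T, ∑ x : S, q x t * (Real.log (q x t) + Real.log (s (h t))
          - Real.log (r t) - Real.log (m x (h t))) :=
      Finset.sum_le_sum fun t _ => Finset.sum_le_sum fun x _ => hterm x t
    have h2 : ∑ t : T, ∑ x : S, (q x t - b x t)
        = (∑ t : T, ∑ x : S, q x t) - ∑ t : T, ∑ x : S, b x t := by
      simp [Finset.sum_sub_distrib]
    rw [h2, hqsum] at h1
    linarith [hbsum]
  -- assemble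
  unfold mutualInfo
  rw [hE1, hE2, hE3, hE4]
  have expand : ∀ t x, q x t * (Real.log (q x t) + Real.log (s (h t))
      - Real.log (r t) - Real.log (m x (h t)))
      = q x t * Real.log (q x t) + q x t * Real.log (s (h t))
        - q x t * Real.log (r t) - q x t * Real.log (m x (h t)) := by
    intro t x; ring
  rw [Finset.sum_congr rfl (fun t _ => Finset.sum_congr rfl fun x _ => expand t x)] at hkey
  simp only [Finset.sum_sub_distrib, Finset.sum_add_distrib] at hkey
  linarith [hkey]

theorem stmt7 {Ω : Type*} [MeasurableSpace Ω] (μ : Measure Ω) [IsProbabilityMeasure μ]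
    {TY TE TX Sc Sp A B : Type*} [Fintype TY] [MeasurableSpace TY] [MeasurableSingletonClass TY] [Fintype TE] [MeasurableSpace TE] [MeasurableSingletonClass TE] [Fintype TX] [MeasurableSpace TX] [MeasurableSingletonClass TX]
    [Fintype Sc] [MeasurableSpace Sc] [MeasurableSingletonClass Sc] [Fintype Sp] [MeasurableSpace Sp] [MeasurableSingletonClass Sp] [Fintype A] [MeasurableSpace A] [MeasurableSingletonClass A] [Fintype B] [MeasurableSpace B] [MeasurableSingletonClass B]
    (Y : Ω → TY) (E : Ω → TE) (X : Ω → TX) (Zc : Ω → Sc) (Φ : Ω → Sp)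
    (hY : Measurable Y) (hE : Measurable E) (hX : Measurable X)
    (hZc : Measurable Zc) (hΦ : Measurable Φ)
    (f : Sc → A) (g : Sp → B) (hf : Measurable f) (hg : Measurable g)
    (hfull : condMutualInfo μ Y E (fun ω => (Zc ω, Φ ω)) = 0)
    (hsub : ∀ (A' B' : Type) [Fintype A'] [MeasurableSpace A'] [MeasurableSingletonClass A']
        [Fintype B'] [MeasurableSpace B'] [MeasurableSingletonClass B']
        (f' : Sc → A') (g' : Sp → B'), Measurable f' → Measurable g' →
        condMutualInfo μ Y E (fun ω => (f' (Zc ω), g' (Φ ω))) = 0) :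
    ∀ lam beta : ℝ, 0 < lam → 0 < beta →
      lam * condMutualInfo μ Y E (fun ω => (f (Zc ω), g (Φ ω)))
          + beta * mutualInfo μ X (fun ω => (f (Zc ω), g (Φ ω)))
        ≤ lam * condMutualInfo μ Y E (fun ω => (Zc ω, Φ ω))
          + beta * mutualInfo μ X (fun ω => (Zc ω, Φ ω)) := by
  intro lam beta hlam hbeta
  classical
  set eA := Fintype.equivFin A with heA
  set eB := Fintype.equivFin B with heB
  have hone : condMutualInfo μ Y E
      (fun ω => (eA (f (Zc ω)), eB (g (Φ ω)))) = 0 :=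
    hsub (Fin (Fintype.card A)) (Fin (Fintype.card B))
      (fun a => eA (f a)) (fun b => eB (g b))
      (measurable_of_countable _) (measurable_of_countable _)
  have hzero1 : condMutualInfo μ Y E (fun ω => (f (Zc ω), g (Φ ω))) = 0 := by
    rw [← condMutualInfo_comp_inj μ Y E (fun ω => (f (Zc ω), g (Φ ω)))
      (Prod.map eA eB) (inj_prodMap _ _ eA.injective eB.injective)]
    exact hone
  have hMI : mutualInfo μ X (fun ω => (f (Zc ω), g (Φ ω)))
      ≤ mutualInfo μ X (fun ω => (Zc ω, Φ ω)) :=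
    mutualInfo_comp_le μ X (fun ω => (Zc ω, Φ ω)) (Prod.map f g) hX (hZc.prodMk hΦ)
  rw [hzero1, hfull]
  nlinarith [mul_le_mul_of_nonneg_left hMI (le_of_lt hbeta)]

end FakeInvariance
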